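/- arXiv:math/0510489 — 5 statements merged into one kernel-verified Lean document; each statement's English description precedes it below -/
import Mathlib

section
/- Let E be a real vector space, let A and B be convex subsets of E, and let x be an extreme point of the Minkowski sum A + B. Then there exist unique points a ∈ A and b ∈ B with x = a + b; moreover a is an extreme point of A and b is an extreme point of B. (This is the vertex-decomposition fact for Minkowski sums of polyhedra underlying the paper's Lemma on normal quasifans of Minkowski sums.) -/
open Pointwise

section Field

variable {𝕜 E : Type*} [Field 𝕜] [LinearOrder 𝕜] [IsStrictOrderedRing 𝕜]
  [AddCommGroup E] [Module 𝕜 E]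

lemma add_mem_openSegment_of_add_eq {a a' b b' : E} (h : a + b = a' + b') :
    a + b ∈ openSegment 𝕜 (a + b') (a' + b) :=
  ⟨1 / 2, 1 / 2, by norm_num, by norm_num, by norm_num, by
    linear_combination (norm := module) (-(2⁻¹ : 𝕜)) • h⟩

/-- Exchanging the summands of two decompositions of `a + b` gives two points of `A + B` with
midpoint `a + b`, so extremality forces the decompositions to agree. -/
lemma eq_and_eq_of_add_mem_extremePoints_add {A B : Set E} {a a' b b' : E}
    (ha : a ∈ A) (ha' : a' ∈ A) (hb : b ∈ B) (hb' : b' ∈ B)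
    (hx : a + b ∈ (A + B).extremePoints 𝕜) (h : a + b = a' + b') : a' = a ∧ b' = b := by
  obtain ⟨hb'b, ha'a⟩ := (mem_extremePoints.1 hx).2 _ (Set.add_mem_add ha hb')
    _ (Set.add_mem_add ha' hb) (add_mem_openSegment_of_add_eq h)
  exact ⟨add_right_cancel ha'a, add_left_cancel hb'b⟩

end Field

section OrderedRing

variable {𝕜 E : Type*} [Ring 𝕜] [PartialOrder 𝕜] [IsOrderedRing 𝕜]
  [AddCommGroup E] [Module 𝕜 E]

lemma mem_extremePoints_of_add_mem_extremePoints_add_right {A B : Set E} {a b : E}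
    (ha : a ∈ A) (hb : b ∈ B) (hx : a + b ∈ (A + B).extremePoints 𝕜) :
    b ∈ B.extremePoints 𝕜 :=
  ⟨hb, fun _ hb₁ _ hb₂ hseg ↦ add_left_cancel <|
    hx.2 (Set.add_mem_add ha hb₁) (Set.add_mem_add ha hb₂)
      ((mem_openSegment_translate 𝕜 a).2 hseg)⟩

lemma mem_extremePoints_of_add_mem_extremePoints_add_left {A B : Set E} {a b : E}
    (ha : a ∈ A) (hb : b ∈ B) (hx : a + b ∈ (A + B).extremePoints 𝕜) :
    a ∈ A.extremePoints 𝕜 := by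
  rw [add_comm a, add_comm A] at hx
  exact mem_extremePoints_of_add_mem_extremePoints_add_right hb ha hx

end OrderedRing

theorem extremePoint_of_minkowski_sum_decomposition_general
    {E : Type*} [AddCommGroup E] [Module ℝ E]
    (A B : Set E)
    (x : E) (hx : x ∈ (A + B).extremePoints ℝ) :
    ∃ a b : E, a ∈ A ∧ b ∈ B ∧ x = a + b ∧
      a ∈ A.extremePoints ℝ ∧ b ∈ B.extremePoints ℝ ∧
      ∀ a' b' : E, a' ∈ A → b' ∈ B → x = a' + b' → a' = a ∧ b' = b := by
  obtain ⟨a, ha, b, hb, rfl⟩ := hx.1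
  exact ⟨a, b, ha, hb, rfl, mem_extremePoints_of_add_mem_extremePoints_add_left ha hb hx,
    mem_extremePoints_of_add_mem_extremePoints_add_right ha hb hx,
    fun _ _ ha' hb' h ↦ eq_and_eq_of_add_mem_extremePoints_add ha ha' hb hb' hx h⟩

/-- Vertex decomposition for Minkowski sums: an extreme point of `A + B`
decomposes uniquely as `a + b` with `a ∈ A`, `b ∈ B`, and the summands are
extreme points of `A` and `B` respectively. -/
theorem extremePoint_of_minkowski_sum_decomposition
    {E : Type*} [AddCommGroup E] [Module ℝ E]
    (A B : Set E) (hA : Convex ℝ A) (hB : Convex ℝ B)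
    (x : E) (hx : x ∈ (A + B).extremePoints ℝ) :
    ∃ a b : E, a ∈ A ∧ b ∈ B ∧ x = a + b ∧
      a ∈ A.extremePoints ℝ ∧ b ∈ B.extremePoints ℝ ∧
      ∀ a' b' : E, a' ∈ A → b' ∈ B → x = a' + b' → a' = a ∧ b' = b :=
  extremePoint_of_minkowski_sum_decomposition_general A B x hx
end

section
/- Let E be a finite-dimensional real inner product space, let A, B ⊆ E be nonempty subsets, and let u ∈ E. Then the set of minimizers of w ↦ ⟪u, w⟫ on the Minkowski sum A + B equals the Minkowski sum of the set of minimizers of ⟪u, ·⟫ on A and the set of minimizers of ⟪u, ·⟫ on B, i.e. {x ∈ A + B : ∀ y ∈ A + B, ⟪u, x⟫ ≤ ⟪u, y⟫} = {a ∈ A : ∀ a' ∈ A, ⟪u, a⟫ ≤ ⟪u, a'⟫} + {b ∈ B : ∀ b' ∈ B, ⟪u, b⟫ ≤ ⟪u, b'⟫}. (This expresses that the face of a Minkowski sum in direction u is the sum of the faces, so the normal quasifan of a Minkowski sum is the coarsest common refinement of the normal quasifans of the summands.) -/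
open Pointwise

section Minimizers

variable {M N : Type*} [AddCommMonoid M] [AddCommMonoid N] [PartialOrder N]
  [IsOrderedCancelAddMonoid N] (f : M →+ N) (s t : Set M)

theorem AddMonoidHom.minimizers_add_subset :
    {x ∈ s + t | ∀ y ∈ s + t, f x ≤ f y}
      ⊆ {a ∈ s | ∀ a' ∈ s, f a ≤ f a'} + {b ∈ t | ∀ b' ∈ t, f b ≤ f b'} := by
  rintro _ ⟨⟨a, ha, b, hb, rfl⟩, hmin⟩
  refine ⟨a, ⟨ha, fun a' ha' => ?_⟩, b, ⟨hb, fun b' hb' => ?_⟩, rfl⟩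
  · have h := hmin (a' + b) (Set.add_mem_add ha' hb)
    rw [map_add, map_add] at h
    exact le_of_add_le_add_right h
  · have h := hmin (a + b') (Set.add_mem_add ha hb')
    rw [map_add, map_add] at h
    exact le_of_add_le_add_left h

theorem AddMonoidHom.add_minimizers_subset :
    {a ∈ s | ∀ a' ∈ s, f a ≤ f a'} + {b ∈ t | ∀ b' ∈ t, f b ≤ f b'}
      ⊆ {x ∈ s + t | ∀ y ∈ s + t, f x ≤ f y} := by
  rintro _ ⟨a, ⟨ha, hamin⟩, b, ⟨hb, hbmin⟩, rfl⟩
  refine ⟨Set.add_mem_add ha hb, ?_⟩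
  rintro _ ⟨a', ha', b', hb', rfl⟩
  rw [map_add, map_add]
  exact add_le_add (hamin a' ha') (hbmin b' hb')

theorem AddMonoidHom.minimizers_add :
    {x ∈ s + t | ∀ y ∈ s + t, f x ≤ f y}
      = {a ∈ s | ∀ a' ∈ s, f a ≤ f a'} + {b ∈ t | ∀ b' ∈ t, f b ≤ f b'} :=
  (f.minimizers_add_subset s t).antisymm (f.add_minimizers_subset s t)

end Minimizers

theorem minimizers_inner_minkowski_sum_general
    {E : Type*} [NormedAddCommGroup E] [InnerProductSpace ℝ E]
    (A B : Set E) (u : E) :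
    {x ∈ A + B | ∀ y ∈ A + B, (inner ℝ u x : ℝ) ≤ inner ℝ u y}
      = {a ∈ A | ∀ a' ∈ A, (inner ℝ u a : ℝ) ≤ inner ℝ u a'}
        + {b ∈ B | ∀ b' ∈ B, (inner ℝ u b : ℝ) ≤ inner ℝ u b'} :=
  (innerₛₗ ℝ u).toAddMonoidHom.minimizers_add A B

/-- The set of minimizers of `w ↦ ⟪u, w⟫` on a Minkowski sum `A + B` is the
Minkowski sum of the sets of minimizers on `A` and on `B`. -/
theorem minimizers_inner_minkowski_sum
    {E : Type*} [NormedAddCommGroup E] [InnerProductSpace ℝ E]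
    [FiniteDimensional ℝ E]
    (A B : Set E) (hA : A.Nonempty) (hB : B.Nonempty) (u : E) :
    {x ∈ A + B | ∀ y ∈ A + B, (inner ℝ u x : ℝ) ≤ inner ℝ u y}
      = {a ∈ A | ∀ a' ∈ A, (inner ℝ u a : ℝ) ≤ inner ℝ u a'}
        + {b ∈ B | ∀ b' ∈ B, (inner ℝ u b : ℝ) ≤ inner ℝ u b'} :=
  minimizers_inner_minkowski_sum_general A B u
end

section
/- Let E be a finite-dimensional real inner product space, let σ ⊆ E be a pointed polyhedral cone, and for i = 1, …, r let Δ_i ⊆ E be σ-polyhedra. Fix extreme points v_i of Δ_i and set λ_i := N(Δ_i, v_i). Then the following are equivalent: (i) the point v := v₁ + ⋯ + v_r is an extreme point of the Minkowski sum Δ := Δ₁ + ⋯ + Δ_r; (ii) the cone λ := λ₁ ∩ ⋯ ∩ λ_r has nonempty interior in E. Moreover, if these hold, then λ = N(Δ, v). (This is the paper's Lemma on Minkowski sums: v is a vertex of Δ if and only if λ is a maximal cone of the normal quasifan Λ(Δ), maximal cones being exactly the full-dimensional ones since σ is pointed.) -/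
/-!
A linear functional attains its minimum on a Minkowski sum exactly at sums of minimisers on the
summands, so the intersection of the normal cones is the normal cone of the sum, and the claim
reduces to a single `σ`-polyhedron `Δ = conv F + σ` (a sum of `σ`-polyhedra is again one).

If some `u` is interior to `N(Δ, v)`, then every functional near `u` is minimised at `v`; were
`v` inside a nondegenerate segment of `Δ`, all these functionals would be constant along it, which
is impossible for an open set of functionals. Conversely, if `v` is extreme then `Δ \ {v}` and
`σ \ {0}` (by pointedness) are convex, and `v` cannot be written as `w + c` with `w ∈ Δ \ {v}`,
`c ∈ σ`. Hence `0` is not in the convex hull of the finitely many directions `f - v`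
(`f ∈ F \ {v}`) and nonzero generators of `σ`; a separating functional is strictly positive on all
of them, and so is every functional near it, which puts an open set inside `N(Δ, v)`.
-/

open Pointwise

/-- The normal cone of a subset `Δ` at a point `v`. -/
def normalCone {E : Type*} [NormedAddCommGroup E] [InnerProductSpace ℝ E]
    (Δ : Set E) (v : E) : Set E :=
  {u : E | ∀ w ∈ Δ, (inner ℝ u v : ℝ) ≤ inner ℝ u w}

/-- `σ` is a polyhedral cone: the set of nonnegative linear combinations of a
finite subset of `E`. -/
def IsPolyhedralCone {E : Type*} [AddCommGroup E] [Module ℝ E] (σ : Set E) : Prop :=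
  ∃ S : Finset E, σ = {x : E | ∃ c : E → ℝ, (∀ s, 0 ≤ c s) ∧ x = ∑ s ∈ S, c s • s}

/-- `Δ` is a `σ`-polyhedron: the Minkowski sum of the convex hull of a finite
nonempty set with the cone `σ`. -/
def IsSigmaPolyhedron {E : Type*} [AddCommGroup E] [Module ℝ E]
    (σ Δ : Set E) : Prop :=
  ∃ F : Finset E, F.Nonempty ∧ Δ = convexHull ℝ (↑F : Set E) + σ

open scoped RealInnerProductSpace

theorem notMem_convexHull_union {𝕜 E : Type*} [Field 𝕜] [LinearOrder 𝕜] [IsStrictOrderedRing 𝕜]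
    [AddCommGroup E] [Module 𝕜 E] {X Y : Set E} {z : E} (hX : Convex 𝕜 X) (hY : Convex 𝕜 Y)
    (hzX : z ∉ X) (hzY : z ∉ Y) (hXY : ∀ x ∈ X, ∀ y ∈ Y, z ∉ segment 𝕜 x y) :
    z ∉ convexHull 𝕜 (X ∪ Y) := by
  rcases X.eq_empty_or_nonempty with rfl | hXne
  · rwa [Set.empty_union, hY.convexHull_eq]
  rcases Y.eq_empty_or_nonempty with rfl | hYne
  · rwa [Set.union_empty, hX.convexHull_eq]
  rw [hX.convexHull_union hY hXne hYne, mem_convexJoin]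
  rintro ⟨x, hx, y, hy, hz⟩
  exact hXY x hx y hy hz

section Cones
variable {E : Type*} [AddCommGroup E] [Module ℝ E]

theorem IsPolyhedralCone.exists_finset_eq_hull {σ : Set E} (hσ : IsPolyhedralCone σ) :
    ∃ S : Finset E, σ = PointedCone.hull ℝ (S : Set E) := by
  obtain ⟨S, rfl⟩ := hσ
  refine ⟨S, Set.ext fun x => ⟨?_, fun hx => ?_⟩⟩
  · rintro ⟨c, hc, rfl⟩
    exact Submodule.sum_mem _ fun s hs =>
      PointedCone.smul_mem _ (hc s) (PointedCone.subset_hull hs)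
  · obtain ⟨f, -, rfl⟩ := Submodule.mem_span_finset.1 hx
    exact ⟨fun s => f s, fun s => (f s).2, rfl⟩

theorem ConvexCone.Salient.convex_diff_zero {C : ConvexCone ℝ E} (hC : C.Salient) :
    Convex ℝ ((C : Set E) \ {0}) := by
  rintro x ⟨hxC, hx0⟩ y ⟨hyC, hy0⟩ a b ha hb hab
  refine ⟨C.convex hxC hyC ha hb hab, fun hzero => ?_⟩
  rcases ha.eq_or_lt with rfl | ha
  · simp_all
  rcases hb.eq_or_lt with rfl | hb
  · simp_all
  have hneg : -x = (a⁻¹ * b) • y := by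
    rw [mul_smul, eq_neg_of_add_eq_zero_right hzero, smul_neg, inv_smul_smul₀ ha.ne']
  exact hC x hxC hx0 (hneg ▸ C.smul_mem (by positivity) hyC)

theorem IsSigmaPolyhedron.add {C : PointedCone ℝ E} {Δ₁ Δ₂ : Set E}
    (h₁ : IsSigmaPolyhedron C Δ₁) (h₂ : IsSigmaPolyhedron C Δ₂) :
    IsSigmaPolyhedron C (Δ₁ + Δ₂) := by
  classical
  obtain ⟨F₁, hF₁, rfl⟩ := h₁
  obtain ⟨F₂, hF₂, rfl⟩ := h₂
  refine ⟨F₁ + F₂, hF₁.add hF₂, ?_⟩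
  rw [Finset.coe_add, convexHull_add, add_add_add_comm,
    show (C : Set E) + C = C from C.toAddSubmonoid.coe_add_self_eq]

theorem IsSigmaPolyhedron.finset_sum {C : PointedCone ℝ E} {ι : Type*} {s : Finset ι}
    (hs : s.Nonempty) {Δ : ι → Set E} (h : ∀ i ∈ s, IsSigmaPolyhedron C (Δ i)) :
    IsSigmaPolyhedron C (∑ i ∈ s, Δ i) := by
  induction hs using Finset.Nonempty.cons_induction with
  | singleton a => simpa using h a (Finset.mem_singleton_self a)
  | cons a s ha hs ih =>
    rw [Finset.sum_cons]
    exact (h a (Finset.mem_cons_self a s)).add (ih fun i hi => h i (Finset.mem_cons_of_mem hi))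

theorem eq_of_mem_extremePoints_of_eq_add {Δ : Set E} {C : PointedCone ℝ E}
    (hΔC : ∀ w ∈ Δ, ∀ c ∈ C, w + c ∈ Δ) {v w c : E} (hv : v ∈ Δ.extremePoints ℝ) (hw : w ∈ Δ)
    (hc : c ∈ C) (hvwc : v = w + c) : w = v :=
  hv.2 hw (hΔC w hw _ (C.smul_mem zero_le_two hc))
    ⟨1 / 2, 1 / 2, by norm_num, by norm_num, by norm_num, by rw [hvwc]; module⟩

theorem zero_notMem_convexHull_of_mem_extremePoints {Δ : Set E} {C : PointedCone ℝ E}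
    (hΔ : Convex ℝ Δ) (hC : (C : ConvexCone ℝ E).Salient) (hΔC : ∀ w ∈ Δ, ∀ c ∈ C, w + c ∈ Δ)
    {v : E} (hv : v ∈ Δ.extremePoints ℝ) :
    (0 : E) ∉ convexHull ℝ ((-v +ᵥ (Δ \ {v})) ∪ ((C : Set E) \ {0})) := by
  have h0X : (0 : E) ∉ -v +ᵥ (Δ \ {v}) := by
    rintro ⟨w, ⟨-, hwv⟩, hw⟩
    exact hwv (neg_add_eq_zero.1 hw).symm
  refine notMem_convexHull_union
    ((hΔ.mem_extremePoints_iff_convex_sdiff.1 hv).2.vadd _) hC.convex_diff_zero h0X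
    (fun h => h.2 rfl) ?_
  rintro _ ⟨w, ⟨hw, hwv⟩, rfl⟩ y ⟨hy, hy0⟩ ⟨a, b, ha, hb, hab, hzero⟩
  rcases ha.eq_or_lt with rfl | ha
  · rw [zero_add] at hab
    subst hab
    exact hy0 (by simpa using hzero)
  have hc : (a⁻¹ * b) • y ∈ C := C.smul_mem (by positivity) hy
  refine hwv (eq_of_mem_extremePoints_of_eq_add hΔC hv hw hc ?_)
  apply smul_right_injective E ha.ne'
  simp only [vadd_eq_add] at hzero
  simp only [smul_add, smul_smul, mul_inv_cancel_left₀ ha.ne']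
  linear_combination (norm := module) -hzero

end Cones

section NormalCone
variable {E : Type*} [NormedAddCommGroup E] [InnerProductSpace ℝ E]

theorem iInter_normalCone_eq_normalCone_sum {ι : Type*} [Fintype ι] {Δ : ι → Set E}
    {v : ι → E} (hv : ∀ i, v i ∈ Δ i) :
    ⋂ i, normalCone (Δ i) (v i) = normalCone (∑ i, Δ i) (∑ i, v i) := by
  classical
  ext u
  simp only [Set.mem_iInter]
  constructor
  · intro hu w hw
    obtain ⟨g, hg, rfl⟩ := (Set.mem_fintype_sum _ _).1 hw
    simp only [inner_sum]
    exact Finset.sum_le_sum fun i _ => hu i (g i) (hg i)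
  · intro hu j w hw
    have hmem : w + ∑ i ∈ Finset.univ.erase j, v i ∈ ∑ i, Δ i := by
      rw [← Finset.add_sum_erase _ Δ (Finset.mem_univ j)]
      exact Set.add_mem_add hw (Set.finsetSum_mem_finsetSum _ _ _ fun i _ => hv i)
    have h := hu _ hmem
    rw [← Finset.add_sum_erase _ v (Finset.mem_univ j), inner_add_right, inner_add_right] at h
    linarith

theorem inner_eq_of_mem_normalCone_of_mem_openSegment {Δ : Set E} {u v a b : E}
    (hu : u ∈ normalCone Δ v) (ha : a ∈ Δ) (hb : b ∈ Δ) (hv : v ∈ openSegment ℝ a b) :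
    ⟪u, a⟫ = ⟪u, v⟫ := by
  have hva := hu a ha
  have hvb := hu b hb
  obtain ⟨s, t, hs, ht, hst, rfl⟩ := hv
  obtain rfl : t = 1 - s := by linarith
  simp only [inner_add_right, real_inner_smul_right] at hva hvb ⊢
  have hab : ⟪u, a⟫ = ⟪u, b⟫ := le_antisymm (by nlinarith) (by nlinarith)
  rw [← hab]
  ring

theorem eq_zero_of_forall_inner_eq_zero_of_interior_nonempty {s : Set E} {x : E}
    (hs : (interior s).Nonempty) (h : ∀ u ∈ s, ⟪u, x⟫ = 0) : x = 0 := by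
  have htop : (ℝ ∙ x)ᗮ = ⊤ := Submodule.eq_top_of_nonempty_interior' _ <| hs.mono <|
    interior_mono fun u hu => Submodule.mem_orthogonal_singleton_iff_inner_left.2 (h u hu)
  simpa using htop

theorem mem_extremePoints_of_interior_normalCone_nonempty {Δ : Set E} {v : E} (hv : v ∈ Δ)
    (h : (interior (normalCone Δ v)).Nonempty) : v ∈ Δ.extremePoints ℝ := by
  refine ⟨hv, fun a ha b hb hab => ?_⟩
  have hab' : a - b = 0 := eq_zero_of_forall_inner_eq_zero_of_interior_nonempty h fun u hu => by
    rw [inner_sub_right, inner_eq_of_mem_normalCone_of_mem_openSegment hu ha hb hab,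
      inner_eq_of_mem_normalCone_of_mem_openSegment hu hb ha (openSegment_symm ℝ a b ▸ hab),
      sub_self]
  obtain rfl := sub_eq_zero.1 hab'
  rw [openSegment_same] at hab
  exact hab.symm

theorem exists_forall_inner_pos_of_zero_notMem [CompleteSpace E] {K : Set E}
    (hK : Convex ℝ K) (hKc : IsClosed K) (h0 : (0 : E) ∉ K) : ∃ u, ∀ x ∈ K, 0 < ⟪u, x⟫ := by
  obtain ⟨f, c, hf0, hfK⟩ := geometric_hahn_banach_point_closed hK hKc h0
  refine ⟨(InnerProductSpace.toDual ℝ E).symm f, fun x hx => ?_⟩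
  rw [InnerProductSpace.toDual_symm_apply]
  linarith [hfK x hx, map_zero f]

theorem mem_normalCone_convexHull_add_hull {F S : Set E} {u v : E}
    (hF : ∀ f ∈ F, ⟪u, v⟫ ≤ ⟪u, f⟫) (hS : ∀ s ∈ S, 0 ≤ ⟪u, s⟫) :
    u ∈ normalCone (convexHull ℝ F + (PointedCone.hull ℝ S : Set E)) v := by
  rintro _ ⟨p, hp, s, hs, rfl⟩
  have hp : ⟪u, v⟫ ≤ ⟪u, p⟫ :=
    convexHull_min hF ((convex_Ici ⟪u, v⟫).linear_preimage (innerₛₗ ℝ u)) hp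
  have hu : u ∈ PointedCone.dual (innerₗ E) (PointedCone.hull ℝ S : Set E) := by
    rw [PointedCone.dual_hull]
    intro x hx
    rw [innerₗ_apply_apply, real_inner_comm]
    exact hS x hx
  have hs : 0 ≤ ⟪u, s⟫ := real_inner_comm s u ▸ hu hs
  rw [inner_add_right]
  linarith

theorem interior_normalCone_nonempty_of_mem_extremePoints [CompleteSpace E] {F S : Finset E}
    (hS : (PointedCone.hull ℝ (S : Set E) : ConvexCone ℝ E).Salient) {v : E}
    (hv : v ∈ (convexHull ℝ (F : Set E) +
      (PointedCone.hull ℝ (S : Set E) : Set E)).extremePoints ℝ) :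
    (interior (normalCone
      (convexHull ℝ (F : Set E) + (PointedCone.hull ℝ (S : Set E) : Set E)) v)).Nonempty := by
  set C := PointedCone.hull ℝ (S : Set E)
  set Δ := convexHull ℝ (F : Set E) + (C : Set E)
  have hΔC : ∀ w ∈ Δ, ∀ c ∈ C, w + c ∈ Δ := by
    rintro _ ⟨p, hp, c', hc', rfl⟩ c hc
    exact ⟨p, hp, c' + c, C.add_mem hc' hc, (add_assoc p c' c).symm⟩
  have hFΔ : (F : Set E) ⊆ Δ := fun f hf =>
    ⟨f, subset_convexHull ℝ _ hf, 0, C.zero_mem, add_zero f⟩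
  set T : Set E := (-v +ᵥ ((F : Set E) \ {v})) ∪ ((S : Set E) \ {0})
  have hT : T.Finite := (F.finite_toSet.sdiff.vadd_set).union S.finite_toSet.sdiff
  have hTsub : T ⊆ (-v +ᵥ (Δ \ {v})) ∪ ((C : Set E) \ {0}) :=
    Set.union_subset_union (Set.vadd_set_mono (Set.sdiff_subset_sdiff_left hFΔ))
      (Set.sdiff_subset_sdiff_left PointedCone.subset_hull)
  have hT0 : (0 : E) ∉ convexHull ℝ T := fun h =>
    zero_notMem_convexHull_of_mem_extremePoints ((convex_convexHull ℝ _).add C.convex) hS hΔC hv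
      (convexHull_mono hTsub h)
  obtain ⟨u, hu⟩ :=
    exists_forall_inner_pos_of_zero_notMem (convex_convexHull ℝ T) (hT.isClosed_convexHull ℝ) hT0
  have hUopen : IsOpen (⋂ x ∈ T, {u : E | 0 < ⟪u, x⟫}) :=
    hT.isOpen_biInter fun x _ => isOpen_lt continuous_const (continuous_id.inner continuous_const)
  refine ⟨u, interior_maximal (fun u' hu' => ?_) hUopen
    (Set.mem_iInter₂.2 fun x hx => hu x (subset_convexHull ℝ T hx))⟩
  rw [Set.mem_iInter₂] at hu'
  refine mem_normalCone_convexHull_add_hull (fun f hf => ?_) (fun s hs => ?_)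
  · rcases eq_or_ne f v with rfl | hfv
    · rfl
    have h : 0 < ⟪u', -v + f⟫ := hu' _ (Or.inl ⟨f, ⟨hf, hfv⟩, rfl⟩)
    rw [inner_add_right, inner_neg_right] at h
    linarith
  · rcases eq_or_ne s 0 with rfl | hs0
    · rw [inner_zero_right]
    exact (hu' s (Or.inr ⟨hs, hs0⟩)).le

end NormalCone

/-- Lemma on Minkowski sums: for extreme points `vᵢ` of `σ`-polyhedra `Δᵢ`,
the sum `v₁ + ⋯ + v_r` is an extreme point of `Δ₁ + ⋯ + Δ_r` if and only if
the intersection `λ₁ ∩ ⋯ ∩ λ_r` of the normal cones has nonempty interior;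
in that case this intersection is the normal cone of the sum at `v₁ + ⋯ + v_r`. -/
theorem extremePoint_minkowski_sum_iff_interior_nonempty
    {E : Type*} [NormedAddCommGroup E] [InnerProductSpace ℝ E]
    [FiniteDimensional ℝ E] {r : ℕ}
    (σ : Set E) (hσ : IsPolyhedralCone σ) (hpointed : σ ∩ (-σ) = {0})
    (Δ : Fin r → Set E) (hΔ : ∀ i, IsSigmaPolyhedron σ (Δ i))
    (v : Fin r → E) (hv : ∀ i, v i ∈ (Δ i).extremePoints ℝ) :
    ((∑ i, v i) ∈ (∑ i, Δ i).extremePoints ℝ ↔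
      (interior (⋂ i, normalCone (Δ i) (v i))).Nonempty) ∧
    ((∑ i, v i) ∈ (∑ i, Δ i).extremePoints ℝ →
      (⋂ i, normalCone (Δ i) (v i)) = normalCone (∑ i, Δ i) (∑ i, v i)) := by
  have hsum := iInter_normalCone_eq_normalCone_sum fun i => (hv i).1
  refine ⟨⟨fun hext => ?_, fun hint => ?_⟩, fun _ => hsum⟩
  · rcases isEmpty_or_nonempty (Fin r) with hr | hr
    · simp
    obtain ⟨S, rfl⟩ := hσ.exists_finset_eq_hull
    obtain ⟨F, -, hF⟩ := IsSigmaPolyhedron.finset_sum Finset.univ_nonempty fun i _ => hΔ i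
    rw [hF] at hext
    rw [hsum, hF]
    exact interior_normalCone_nonempty_of_mem_extremePoints
      ((PointedCone.salient_iff_inter_neg_eq_singleton _).2 hpointed) hext
  · exact mem_extremePoints_of_interior_normalCone_nonempty
      (Set.finsetSum_mem_finsetSum _ _ _ fun i _ => (hv i).1) (hsum ▸ hint)
end

section
/- Let E be a finite-dimensional real inner product space, let σ ⊆ E be a convex cone with 0 ∈ σ, let F ⊆ E be a finite nonempty subset, and set Δ := convexHull(F) + σ. For u ∈ E the following are equivalent: (i) the function w ↦ ⟪u, w⟫ is bounded below on Δ; (ii) u belongs to the dual cone σ∨ = {u : ⟪u, s⟫ ≥ 0 for all s ∈ σ}. Moreover, if these hold, then the infimum of ⟪u, ·⟫ over Δ equals the minimum of ⟪u, p⟫ over p ∈ F. (This shows that the evaluation eval_u(Δ) = min_{v∈Δ} ⟪u, v⟫ of a polyhedral coefficient, used to define the evaluations 𝔇(u) of a polyhedral divisor, is well defined exactly for u in the dual cone ω of the tail cone σ.) -/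
open Pointwise

/-! By the minimum principle, the linear functional `⟪u, ·⟫` attains its minimum over
`convexHull F` at a point of `F`, and adding `σ` cannot lower it when `u ∈ σ∨`. If instead
`⟪u, s⟫ < 0` for some `s ∈ σ`, it tends to `-∞` along a ray `p + t • s` inside `Δ`. -/

namespace LinearMap

variable {E : Type*} [AddCommGroup E] [Module ℝ E] (f : E →ₗ[ℝ] ℝ)

theorem nonneg_of_bddBelow_image_of_add_smul_mem {S : Set E} {p s : E}
    (hray : ∀ t : ℝ, 0 ≤ t → p + t • s ∈ S) (hS : BddBelow (f '' S)) : 0 ≤ f s := by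
  obtain ⟨b, hb⟩ := hS
  by_contra! hs
  -- at this `t` the ray gives the value `f p - |f p - b| - 1 < b`
  have ht : 0 ≤ (|f p - b| + 1) / -f s := div_nonneg (by positivity) (by linarith)
  have hbound : b ≤ f p + (|f p - b| + 1) / -f s * f s := by
    simpa using hb ⟨_, hray _ ht, rfl⟩
  rw [div_neg, neg_mul, div_mul_cancel₀ _ hs.ne] at hbound
  linarith [le_abs_self (f p - b)]

variable {σ : Set E} {F : Finset E} (hF : F.Nonempty)

theorem inf'_le_of_mem_convexHull_add (hσ : ∀ s ∈ σ, 0 ≤ f s) {w : E}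
    (hw : w ∈ convexHull ℝ (F : Set E) + σ) : F.inf' hF f ≤ f w := by
  obtain ⟨x, hx, s, hs, rfl⟩ := hw
  obtain ⟨p, hp, hpx⟩ :=
    (f.concaveOn convex_univ).exists_le_of_mem_convexHull (Set.subset_univ _) hx
  calc F.inf' hF f ≤ f p := F.inf'_le f hp
    _ ≤ f x + f s := by linarith [hσ s hs]
    _ = f (x + s) := (map_add f x s).symm

theorem isGLB_image_convexHull_add (h0 : (0 : E) ∈ σ) (hσ : ∀ s ∈ σ, 0 ≤ f s) :
    IsGLB (f '' (convexHull ℝ (F : Set E) + σ)) (F.inf' hF f) := by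
  obtain ⟨p, hp, hpf⟩ := F.exists_mem_eq_inf' hF f
  refine IsLeast.isGLB ⟨⟨p + 0, ⟨p, subset_convexHull ℝ _ hp, 0, h0, rfl⟩, by simp [hpf]⟩, ?_⟩
  rintro _ ⟨w, hw, rfl⟩
  exact f.inf'_le_of_mem_convexHull_add hF hσ hw

end LinearMap

theorem inner_bddBelow_iff_mem_dualCone_general
    {E : Type*} [NormedAddCommGroup E] [InnerProductSpace ℝ E]
    (σ : Set E) (h0 : (0 : E) ∈ σ)
    (hsmul : ∀ c : ℝ, 0 ≤ c → ∀ x ∈ σ, c • x ∈ σ)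
    (F : Finset E) (hF : F.Nonempty) (u : E) :
    (BddBelow ((fun w => (inner ℝ u w : ℝ)) '' (convexHull ℝ (↑F : Set E) + σ)) ↔
      ∀ s ∈ σ, 0 ≤ (inner ℝ u s : ℝ)) ∧
    ((∀ s ∈ σ, 0 ≤ (inner ℝ u s : ℝ)) →
      IsGLB ((fun w => (inner ℝ u w : ℝ)) '' (convexHull ℝ (↑F : Set E) + σ))
        (F.inf' hF fun p => (inner ℝ u p : ℝ))) := by
  have hGLB := (innerₗ E u).isGLB_image_convexHull_add hF h0
  refine ⟨⟨fun hbdd s hs => ?_, fun hu => (hGLB hu).bddBelow⟩, hGLB⟩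
  obtain ⟨p, hp⟩ := hF
  exact (innerₗ E u).nonneg_of_bddBelow_image_of_add_smul_mem
    (S := convexHull ℝ (F : Set E) + σ)
    (fun t ht => ⟨p, subset_convexHull ℝ _ hp, t • s, hsmul t ht s hs, rfl⟩) hbdd

/-- For `Δ = convexHull F + σ` with `σ` a convex cone containing `0`,
the linear functional `⟪u, ·⟫` is bounded below on `Δ` if and only if `u`
belongs to the dual cone of `σ`; in that case, its infimum on `Δ` equals
the minimum of `⟪u, p⟫` over `p ∈ F`. -/
theorem inner_bddBelow_iff_mem_dualCone
    {E : Type*} [NormedAddCommGroup E] [InnerProductSpace ℝ E]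
    [FiniteDimensional ℝ E]
    (σ : Set E) (h0 : (0 : E) ∈ σ)
    (hadd : ∀ x ∈ σ, ∀ y ∈ σ, x + y ∈ σ)
    (hsmul : ∀ c : ℝ, 0 ≤ c → ∀ x ∈ σ, c • x ∈ σ)
    (F : Finset E) (hF : F.Nonempty) (u : E) :
    (BddBelow ((fun w => (inner ℝ u w : ℝ)) '' (convexHull ℝ (↑F : Set E) + σ)) ↔
      ∀ s ∈ σ, 0 ≤ (inner ℝ u s : ℝ)) ∧
    ((∀ s ∈ σ, 0 ≤ (inner ℝ u s : ℝ)) →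
      IsGLB ((fun w => (inner ℝ u w : ℝ)) '' (convexHull ℝ (↑F : Set E) + σ))
        (F.inf' hF fun p => (inner ℝ u p : ℝ))) :=
  inner_bddBelow_iff_mem_dualCone_general σ h0 hsmul F hF u
end

section
/- Let E be a finite-dimensional real inner product space, let σ ⊆ E be a pointed polyhedral cone, let Δ ⊆ E be a σ-polyhedron, and let u ∈ σ∨ be an element of the dual cone of σ. Then there exists an extreme point v of Δ minimizing ⟪u, ·⟫ over Δ, i.e. ⟪u, v⟫ ≤ ⟪u, w⟫ for all w ∈ Δ. Equivalently, every u in the dual cone σ∨ lies in the normal cone N(Δ, v) of some extreme point v of Δ, so the normal quasifan of Δ covers σ∨. (This is the fact that the normal quasifan Λ(Δ) subdivides the dual cone ω of σ, used in the description of the fibres of π in the paper.) -/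
/-!
Maximizing `-⟪u, ·⟫` over `Δ = conv F + σ` is additive over the Minkowski sum, so it exposes a
face `F₁ + σ₁` with `F₁` a compact face of `conv F` and `σ₁ ⊆ σ`. As `σ` is pointed, a separating
functional `f` is positive on `σ \ {0}`; maximizing `-f` over `F₁ + σ₁` then exposes a compact
face of `F₁` alone, which has an extreme point by Krein–Milman. Faces of faces are faces, so this
point is extreme in `Δ`, and it lies in the first face, i.e. minimizes `⟪u, ·⟫`.
-/

open Pointwise

namespace ContinuousLinearMap

theorem toExposed_add {𝕜 E : Type*} [TopologicalSpace 𝕜] [Ring 𝕜] [PartialOrder 𝕜]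
    [IsOrderedAddMonoid 𝕜] [AddCommGroup E] [TopologicalSpace E] [Module 𝕜 E]
    (l : StrongDual 𝕜 E) (A B : Set E) :
    l.toExposed (A + B) = l.toExposed A + l.toExposed B := by
  ext x
  constructor
  · rintro ⟨⟨a, ha, b, hb, rfl⟩, hmax⟩
    refine ⟨a, ⟨ha, fun a' ha' => ?_⟩, b, ⟨hb, fun b' hb' => ?_⟩, rfl⟩
    · simpa using hmax (a' + b) (Set.add_mem_add ha' hb)
    · simpa using hmax (a + b') (Set.add_mem_add ha hb')
  · rintro ⟨a, ⟨ha, hmaxA⟩, b, ⟨hb, hmaxB⟩, rfl⟩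
    refine ⟨Set.add_mem_add ha hb, ?_⟩
    rintro _ ⟨a', ha', b', hb', rfl⟩
    simpa using add_le_add (hmaxA a' ha') (hmaxB b' hb')

theorem toExposed_nonempty_of_isCompact {𝕜 E : Type*} [TopologicalSpace 𝕜] [Ring 𝕜]
    [LinearOrder 𝕜] [ClosedIciTopology 𝕜] [AddCommMonoid E] [TopologicalSpace E] [Module 𝕜 E]
    (l : StrongDual 𝕜 E) {A : Set E} (hA : IsCompact A) (hA₀ : A.Nonempty) :
    (l.toExposed A).Nonempty := by
  obtain ⟨x, hx, hmax⟩ := hA.exists_isMaxOn hA₀ l.continuous.continuousOn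
  exact ⟨x, hx, hmax⟩

end ContinuousLinearMap

section LocallyConvex

open ContinuousLinearMap

variable {E : Type*} [AddCommGroup E] [Module ℝ E] [TopologicalSpace E] [T2Space E]
  [IsTopologicalAddGroup E] [ContinuousSMul ℝ E] [LocallyConvexSpace ℝ E]

theorem extremePoints_add_nonempty {K C : Set E} (hK : IsCompact K) (hK₀ : K.Nonempty)
    (hC₀ : (0 : E) ∈ C) (f : StrongDual ℝ E) (hf : ∀ x ∈ C, x ≠ 0 → 0 < f x) :
    ((K + C).extremePoints ℝ).Nonempty := by
  have hC : (-f).toExposed C = {0} := by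
    refine Set.eq_singleton_iff_unique_mem.2 ⟨⟨hC₀, fun x hx => ?_⟩, fun x ⟨hx, hmax⟩ => ?_⟩
    · by_cases h : x = 0
      · simp [h]
      · simpa using (hf x hx h).le
    · by_contra h
      have := hmax 0 hC₀
      simp only [map_zero, neg_apply, Left.nonneg_neg_iff] at this
      exact (hf x hx h).not_ge this
  have hface : (-f).toExposed (K + C) = (-f).toExposed K := by
    rw [toExposed_add, hC, Set.singleton_zero, add_zero]
  obtain ⟨v, hv⟩ := (toExposed.isExposed.isCompact hK).extremePoints_nonempty
    ((-f).toExposed_nonempty_of_isCompact hK hK₀)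
  rw [← hface] at hv
  exact ⟨v, toExposed.isExposed.isExtreme.extremePoints_subset_extremePoints hv⟩

end LocallyConvex

section NonnegCombinations

variable {E : Type*} [AddCommGroup E] [Module ℝ E]

def nonnegCombinations (S : Finset E) : Set E :=
  {x : E | ∃ c : E → ℝ, (∀ s, 0 ≤ c s) ∧ x = ∑ s ∈ S, c s • s}

theorem zero_mem_nonnegCombinations (S : Finset E) : (0 : E) ∈ nonnegCombinations S :=
  ⟨0, fun _ => le_rfl, by simp⟩

theorem coeff_eq_zero_of_sum_smul_eq_zero {S : Finset E}
    (hpointed : nonnegCombinations S ∩ -nonnegCombinations S = {0}) {c : E → ℝ}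
    (hc : ∀ s, 0 ≤ c s) (hsum : ∑ s ∈ S, c s • s = 0) {t : E} (ht : t ∈ S) (ht₀ : t ≠ 0) :
    c t = 0 := by
  classical
  have hsingle : ∑ s ∈ S, (Pi.single t (c t) : E → ℝ) s • s = c t • t :=
    (Finset.sum_eq_single_of_mem t ht fun s _ hs => by simp [hs]).trans (by simp)
  have hpos : c t • t ∈ nonnegCombinations S :=
    ⟨(Pi.single t (c t) : E → ℝ), fun s => by rcases eq_or_ne s t with rfl | h <;> simp [*],
      hsingle.symm⟩
  have hneg : -(c t • t) ∈ nonnegCombinations S := by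
    refine ⟨c - Pi.single t (c t), fun s => ?_, ?_⟩
    · rcases eq_or_ne s t with rfl | h <;> simp [*]
    · simp only [Pi.sub_apply, sub_smul, Finset.sum_sub_distrib, hsum, hsingle, zero_sub]
  have : c t • t ∈ nonnegCombinations S ∩ -nonnegCombinations S := ⟨hpos, hneg⟩
  rw [hpointed, Set.mem_singleton_iff, smul_eq_zero] at this
  exact this.resolve_right ht₀

theorem zero_notMem_convexHull_of_pointed {S : Finset E}
    (hpointed : nonnegCombinations S ∩ -nonnegCombinations S = {0}) :
    (0 : E) ∉ convexHull ℝ ((S : Set E) \ {0}) := by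
  classical
  intro h
  rw [← Finset.coe_erase] at h
  obtain ⟨w, hw₀, hw₁, hw⟩ := Finset.mem_convexHull'.1 h
  set c : E → ℝ := fun s => if s ∈ S.erase 0 then w s else 0
  have hsum : ∑ s ∈ S, c s • s = 0 := by
    simp only [c, ite_smul, zero_smul, Finset.sum_ite_mem,
      Finset.inter_eq_right.2 (Finset.erase_subset 0 S), hw]
  have hc : ∀ s, 0 ≤ c s := fun s => by
    by_cases hs : s ∈ S.erase 0
    · simpa only [c, if_pos hs] using hw₀ s hs
    · simp only [c, if_neg hs, le_refl]
  have : ∑ s ∈ S.erase 0, w s = 0 := Finset.sum_eq_zero fun s hs => by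
    simpa only [c, if_pos hs] using coeff_eq_zero_of_sum_smul_eq_zero hpointed hc hsum
      (Finset.mem_of_mem_erase hs) (Finset.ne_of_mem_erase hs)
  exact one_ne_zero (hw₁.symm.trans this)

theorem exists_pos_on_nonnegCombinations [TopologicalSpace E] [T2Space E]
    [IsTopologicalAddGroup E] [ContinuousSMul ℝ E] [LocallyConvexSpace ℝ E] {S : Finset E}
    (hpointed : nonnegCombinations S ∩ -nonnegCombinations S = {0}) :
    ∃ f : StrongDual ℝ E, ∀ x ∈ nonnegCombinations S, x ≠ 0 → 0 < f x := by
  obtain ⟨f, a, hfa, hf⟩ := geometric_hahn_banach_point_closed (convex_convexHull ℝ _)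
    ((S.finite_toSet.sdiff (t := {0})).isCompact_convexHull (𝕜 := ℝ)).isClosed
    (zero_notMem_convexHull_of_pointed hpointed)
  rw [map_zero] at hfa
  have hfS : ∀ s ∈ S, s ≠ 0 → 0 < f s := fun s hs hs₀ =>
    hfa.trans (hf s (subset_convexHull ℝ _ ⟨hs, hs₀⟩))
  refine ⟨f, ?_⟩
  rintro _ ⟨c, hc, rfl⟩ hx
  obtain ⟨t, ht, hct⟩ := Finset.exists_ne_zero_of_sum_ne_zero hx
  have ht₀ : t ≠ 0 := right_ne_zero_of_smul hct
  simp only [map_sum, map_smul, smul_eq_mul]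
  refine Finset.sum_pos' (fun s hs => ?_) ⟨t, ht, ?_⟩
  · rcases eq_or_ne s 0 with rfl | hs₀
    · simp
    · exact mul_nonneg (hc s) (hfS s hs hs₀).le
  · exact mul_pos ((hc t).lt_of_ne (left_ne_zero_of_smul hct).symm) (hfS t ht ht₀)

end NonnegCombinations

theorem exists_extremePoint_minimizing_of_mem_dualCone_general
    {E : Type*} [NormedAddCommGroup E] [InnerProductSpace ℝ E]
    (σ : Set E) (hσ : IsPolyhedralCone σ) (hpointed : σ ∩ (-σ) = {0})
    (Δ : Set E) (hΔ : IsSigmaPolyhedron σ Δ)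
    (u : E) (hu : ∀ s ∈ σ, 0 ≤ (inner ℝ u s : ℝ)) :
    ∃ v ∈ Δ.extremePoints ℝ, ∀ w ∈ Δ, (inner ℝ u v : ℝ) ≤ inner ℝ u w := by
  obtain ⟨S, rfl⟩ := hσ
  obtain ⟨F, hF, rfl⟩ := hΔ
  obtain ⟨f, hf⟩ := exists_pos_on_nonnegCombinations hpointed
  set g : StrongDual ℝ E := -innerSL ℝ u
  have hK : IsCompact (convexHull ℝ (F : Set E)) := F.finite_toSet.isCompact_convexHull (𝕜 := ℝ)
  have h₀ : (0 : E) ∈ g.toExposed (nonnegCombinations S) :=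
    ⟨zero_mem_nonnegCombinations S, fun s hs => by simpa [g] using hu s hs⟩
  obtain ⟨v, hv⟩ := extremePoints_add_nonempty
    (ContinuousLinearMap.toExposed.isExposed.isCompact hK)
    (g.toExposed_nonempty_of_isCompact hK ((Finset.coe_nonempty.2 hF).convexHull (𝕜 := ℝ)))
    h₀ f fun x hx => hf x hx.1
  rw [← g.toExposed_add] at hv
  refine ⟨v, ContinuousLinearMap.toExposed.isExposed.isExtreme.extremePoints_subset_extremePoints hv,
    fun w hw => ?_⟩
  simpa [g] using (extremePoints_subset hv).2 w hw

/-- Every `u` in the dual cone of the pointed polyhedral tail cone `σ` lies in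
the normal cone of some vertex of the `σ`-polyhedron `Δ`: there is an extreme
point of `Δ` minimizing `⟪u, ·⟫` on `Δ`. -/
theorem exists_extremePoint_minimizing_of_mem_dualCone
    {E : Type*} [NormedAddCommGroup E] [InnerProductSpace ℝ E]
    [FiniteDimensional ℝ E]
    (σ : Set E) (hσ : IsPolyhedralCone σ) (hpointed : σ ∩ (-σ) = {0})
    (Δ : Set E) (hΔ : IsSigmaPolyhedron σ Δ)
    (u : E) (hu : ∀ s ∈ σ, 0 ≤ (inner ℝ u s : ℝ)) :
    ∃ v ∈ Δ.extremePoints ℝ, ∀ w ∈ Δ, (inner ℝ u v : ℝ) ≤ inner ℝ u w :=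
  exists_extremePoint_minimizing_of_mem_dualCone_general σ hσ hpointed Δ hΔ u hu
end
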